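/- Fix an integer n ∈ {0, 1, 2}. In ℝ³ with the Euclidean norm, let L be the set of all ℤ-linear combinations of the vectors (0, √3, 0), (3, 0, 0) and (n, 0, 4). Then every nonzero element of L has norm at least √3, and the only elements of L of norm exactly √3 are (0, √3, 0) and (0, −√3, 0). -/

import Mathlib

/-!
The lattice vector `a v₁ + b v₂ + c v₃` is `(3b + cn, a√3, 4c)`, of squared norm
`3a² + (3b + cn)² + 16c²`. If `c ≠ 0` this is at least `16`; if `c = 0` it is
`3(a² + 3b²)`, a multiple of `3` that equals `3` only for `b = 0`, `a = ±1`.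
-/

open Real

theorem EuclideanSpace.norm_sq_vec3 (x y z : ℝ) :
    ‖(!₂[x, y, z] : EuclideanSpace ℝ (Fin 3))‖ ^ 2 = x ^ 2 + y ^ 2 + z ^ 2 := by
  simp [EuclideanSpace.real_norm_sq_eq, Fin.sum_univ_three]

theorem norm_sq_smul_add_smul_add_smul (n a b c : ℝ) :
    ‖a • (!₂[0, √3, 0] : EuclideanSpace ℝ (Fin 3)) + b • !₂[3, 0, 0] + c • !₂[n, 0, 4]‖ ^ 2
      = 3 * a ^ 2 + (3 * b + c * n) ^ 2 + 16 * c ^ 2 := by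
  have hcoord : a • (!₂[0, √3, 0] : EuclideanSpace ℝ (Fin 3)) + b • !₂[3, 0, 0]
      + c • !₂[n, 0, 4] = !₂[3 * b + c * n, a * √3, 4 * c] := by
    ext i
    fin_cases i <;> simp <;> ring
  rw [hcoord, EuclideanSpace.norm_sq_vec3, mul_pow, sq_sqrt zero_le_three]
  ring

def latticeForm (n : ℝ) (a b c : ℤ) : ℝ :=
  3 * (a : ℝ) ^ 2 + (3 * b + c * n) ^ 2 + 16 * c ^ 2

namespace latticeForm

variable (n : ℝ) {a b c : ℤ}

theorem sixteen_le (hc : c ≠ 0) : 16 ≤ latticeForm n a b c := by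
  have hc_sq : (0 : ℤ) < c ^ 2 := by positivity
  have : (1 : ℝ) ≤ (c : ℝ) ^ 2 := by exact_mod_cast hc_sq
  unfold latticeForm
  nlinarith [sq_nonneg (a : ℝ), sq_nonneg (3 * b + c * n)]

theorem zero_right : latticeForm n a b 0 = 3 * ((a ^ 2 + 3 * b ^ 2 : ℤ) : ℝ) := by
  unfold latticeForm
  push_cast
  ring

theorem three_le_of_pos (h : 0 < latticeForm n a b c) : 3 ≤ latticeForm n a b c := by
  rcases eq_or_ne c 0 with rfl | hc
  · rw [zero_right] at h ⊢
    have : (0 : ℤ) < a ^ 2 + 3 * b ^ 2 := by exact_mod_cast pos_of_mul_pos_right h zero_le_three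
    have : (1 : ℝ) ≤ ((a ^ 2 + 3 * b ^ 2 : ℤ) : ℝ) := by exact_mod_cast this
    linarith
  · linarith [sixteen_le n (a := a) (b := b) hc]

theorem eq_three_iff : latticeForm n a b c = 3 ↔ c = 0 ∧ b = 0 ∧ (a = 1 ∨ a = -1) := by
  refine ⟨fun h => ?_, ?_⟩
  · obtain rfl : c = 0 := by
      by_contra hc
      linarith [sixteen_le n (a := a) (b := b) hc]
    rw [zero_right] at h
    have hab : a ^ 2 + 3 * b ^ 2 = 1 := by
      exact_mod_cast (by linarith : ((a ^ 2 + 3 * b ^ 2 : ℤ) : ℝ) = 1)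
    obtain rfl : b = 0 := by nlinarith [sq_nonneg a, sq_nonneg b]
    exact ⟨rfl, rfl, sq_eq_one_iff.mp (by simpa using hab)⟩
  · rintro ⟨rfl, rfl, rfl | rfl⟩ <;> norm_num [zero_right]

end latticeForm

theorem shortest_vectors_h2_odd (n : ℤ) :
    let v₁ : EuclideanSpace ℝ (Fin 3) := !₂[0, Real.sqrt 3, 0]
    let v₂ : EuclideanSpace ℝ (Fin 3) := !₂[3, 0, 0]
    let v₃ : EuclideanSpace ℝ (Fin 3) := !₂[(n : ℝ), 0, 4]
    let L : Set (EuclideanSpace ℝ (Fin 3)) :=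
      {v | ∃ a b c : ℤ, v = (a : ℝ) • v₁ + (b : ℝ) • v₂ + (c : ℝ) • v₃}
    (∀ v ∈ L, v ≠ 0 → Real.sqrt 3 ≤ ‖v‖) ∧
    (∀ v ∈ L, ‖v‖ = Real.sqrt 3 → v = v₁ ∨ v = -v₁) := by
  intro v₁ v₂ v₃ L
  have hnorm (a b c : ℤ) :
      ‖(a : ℝ) • v₁ + (b : ℝ) • v₂ + (c : ℝ) • v₃‖ ^ 2 = latticeForm n a b c :=
    norm_sq_smul_add_smul_add_smul n a b c
  refine ⟨?_, ?_⟩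
  · rintro v ⟨a, b, c, rfl⟩ hv
    have hpos := pow_pos (norm_pos_iff.mpr hv) 2
    rw [hnorm] at hpos
    rw [← sqrt_sq (norm_nonneg _), hnorm]
    exact sqrt_le_sqrt (latticeForm.three_le_of_pos n hpos)
  · rintro v ⟨a, b, c, rfl⟩ hv
    have h3 := hnorm a b c
    rw [hv, sq_sqrt zero_le_three] at h3
    obtain ⟨rfl, rfl, rfl | rfl⟩ := (latticeForm.eq_three_iff n).mp h3.symm
    · left
      simp
    · right
      simp only [Int.cast_neg, Int.cast_one, Int.cast_zero, zero_smul, add_zero, neg_one_smul]
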